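/- Let k be a non-negative integer and let τ be a locally compact Hausdorff shift-continuous topology on B⁰(B_k) in which the adjoined zero 0* is not isolated. Then for every open neighborhood U of 0* there exists a non-negative integer n_U such that for every integer n > n_U one has [0,n+1] ∩ U = {x · (0,(0,0),1) : x ∈ [0,n] ∩ U}. -/

import Mathlib

open Ordinal Set Topology

noncomputable section

/-- The `α`-bicyclic monoid: pairs of ordinals below `ω ^ α`. -/
def Bicyclic (α : Ordinal) : Type 1 :=
  {p : Ordinal × Ordinal // p.1 < ω ^ α ∧ p.2 < ω ^ α}

namespace Bicyclic

variable {α : Ordinal}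

def mk (a b : Ordinal) (ha : a < ω ^ α) (hb : b < ω ^ α) : Bicyclic α :=
  ⟨(a, b), ha, hb⟩

instance : Mul (Bicyclic α) :=
  ⟨fun x y =>
    if x.val.2 ≤ y.val.1 then
      ⟨(x.val.1 + (y.val.1 - x.val.2), y.val.2),
        (principal_add_omega0_opow α) x.2.1
          (lt_of_le_of_lt (Ordinal.sub_le_self _ _) y.2.1),
        y.2.2⟩
    else
      ⟨(x.val.1, y.val.2 + (x.val.2 - y.val.1)),
        x.2.1,
        (principal_add_omega0_opow α) y.2.2
          (lt_of_le_of_lt (Ordinal.sub_le_self _ _) x.2.2)⟩⟩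

instance : One (Bicyclic α) :=
  ⟨⟨(0, 0), opow_pos α omega0_pos, opow_pos α omega0_pos⟩⟩

end Bicyclic

/-- The Bruck extension of a semigroup `S`. -/
def Bruck (S : Type*) : Type _ := ℕ × S × ℕ

def Bruck.mk {S : Type*} (n : ℕ) (s : S) (m : ℕ) : Bruck S := (n, s, m)

instance {S : Type*} [Mul S] : Mul (Bruck S) :=
  ⟨fun x y =>
    if x.2.2 < y.1 then (x.1 + y.1 - x.2.2, y.2.1, y.2.2)
    else if y.1 < x.2.2 then (x.1, x.2.1, y.2.2 + x.2.2 - y.1)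
    else (x.1, x.2.1 * y.2.1, y.2.2)⟩

/-- The Bruck extension of `S` with an adjoined (absorbing) zero `0*`. -/
abbrev BruckZero (S : Type*) := WithZero (Bruck S)

/-- The box `[n,m]` in the Bruck extension with zero. -/
def box (S : Type*) (n m : ℕ) : Set (BruckZero S) :=
  {x | ∃ s : S, x = ↑(Bruck.mk n s m)}

/-- A topology on `X` is shift-continuous if all two-sided shifts `x ↦ a * x * b`
are continuous. -/
def ShiftContinuous (X : Type*) [Mul X] [TopologicalSpace X] : Prop :=
  ∀ a b : X, Continuous fun x => a * x * b


/-!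
Call a nonzero `(a, s, b)` far (beyond `N`) when `a ≥ N` or `b ≥ N`. Every point of
`⋂ N, closure (far N)` is `0`: at `(A, σ, B)` there are two shifts that agree on all far
points on one side but differ at `(A, σ, B)`, and in a Hausdorff space the set where two continuous
maps agree is closed. By compactness, on a compact neighbourhood `K` of `0` any continuous shift
fixing `0` then sends the far points of `K` into `V = interior K`. Each box is separated from `0` by
the shift collapsing it onto the identity, so since `0` is not isolated, `V` contains far points.
Moving one of them with the shifts `b ↦ b ± 1`, `a ↦ a - 1`, `(0, s, b) ↦ (0, 1, b + 1)` and
`(0, 1, b) ↦ (0, s, b)`, each of which maps the far points of `V` into `V`, shows that `V`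
contains every `(0, s, b)` with `b` large. For large `n` the boxes `[0, n]` and `[0, n + 1]` lie in `U`, and right
multiplication by `(0, 1, 1)` maps the first onto the second.
-/

namespace Bicyclic

variable {α : Ordinal}

theorem val_mul (x y : Bicyclic α) :
    (x * y).val = if x.val.2 ≤ y.val.1 then (x.val.1 + (y.val.1 - x.val.2), y.val.2)
      else (x.val.1, y.val.2 + (x.val.2 - y.val.1)) := by
  change (ite _ _ _ : Bicyclic α).val = _
  by_cases h : x.val.2 ≤ y.val.1 <;> simp [h]

theorem val_one : (1 : Bicyclic α).val = (0, 0) := rfl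

instance : MulOneClass (Bicyclic α) where
  one_mul s := Subtype.ext <| by simp [val_mul, val_one]
  mul_one s := Subtype.ext <| by
    rw [val_mul, val_one]
    split_ifs with h
    · have h0 : s.val.2 = 0 := nonpos_iff_eq_zero.mp h
      exact Prod.ext (by simp [h0]) h0.symm
    · simp

end Bicyclic

namespace Bruck

variable {S : Type*}

theorem mk_inj {a b a' b' : ℕ} {s s' : S} :
    mk a s b = mk a' s' b' ↔ a = a' ∧ s = s' ∧ b = b' :=
  Prod.mk_inj.trans (and_congr_right fun _ => Prod.mk_inj)

section Mul

variable [Mul S] (a b c d : ℕ) (s t : S)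

theorem mk_mul_mk : mk a s b * mk c t d =
    if b < c then mk (a + c - b) t d else if c < b then mk a s (d + b - c) else mk a (s * t) d :=
  rfl

variable {a b c d}

theorem mk_mul_mk_of_lt (h : b < c) : mk a s b * mk c t d = mk (a + c - b) t d := by
  rw [mk_mul_mk, if_pos h]

theorem mk_mul_mk_of_gt (h : c < b) : mk a s b * mk c t d = mk a s (d + b - c) := by
  rw [mk_mul_mk, if_neg h.not_gt, if_pos h]

theorem mk_mul_mk_self : mk a s b * mk b t d = mk a (s * t) d := by
  simp [mk_mul_mk]

end Mul

section MulOneClass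

variable [MulOneClass S] {a b c d : ℕ} {s : S}

theorem mk_mul_mk_one_of_le (h : c ≤ b) : mk a s b * mk c 1 d = mk a s (d + b - c) := by
  rcases h.lt_or_eq with h | rfl
  · exact mk_mul_mk_of_gt s 1 h
  · simp [mk_mul_mk_self]

theorem mk_one_mul_mk_of_le (h : b ≤ c) : mk a 1 b * mk c s d = mk (a + c - b) s d := by
  rcases h.lt_or_eq with h | rfl
  · exact mk_mul_mk_of_lt 1 s h
  · simp [mk_mul_mk_self]

instance : MulOneClass (Bruck S) where
  one := mk 0 1 0
  one_mul := fun ⟨a, s, b⟩ =>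
    (mk_one_mul_mk_of_le (Nat.zero_le a)).trans (congrArg (mk · s b) (by simp))
  mul_one := fun ⟨a, s, b⟩ =>
    (mk_mul_mk_one_of_le (Nat.zero_le b)).trans (congrArg (mk a s) (by simp))

theorem mk_mul_mk_zero_one_one : mk a s b * mk 0 1 1 = mk a s (b + 1) := by
  rw [mk_mul_mk_one_of_le (Nat.zero_le b), Nat.add_comm, Nat.sub_zero]

end MulOneClass

end Bruck

theorem ShiftContinuous.separatelyContinuousMul {X : Type*} [MulOneClass X] [TopologicalSpace X]
    (h : ShiftContinuous X) : SeparatelyContinuousMul X where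
  continuous_const_mul {a} := by simpa using h a 1
  continuous_mul_const {a} := by simpa using h 1 a

namespace BruckZero

open Bruck

variable {S : Type*}

theorem eq_zero_or_exists_eq_mk (x : BruckZero S) :
    x = 0 ∨ ∃ (a : ℕ) (s : S) (b : ℕ), x = ↑(mk a s b) := by
  rcases x with _ | ⟨a, s, b⟩
  · exact Or.inl rfl
  · exact Or.inr ⟨a, s, b, rfl⟩

variable (S) in
def farLeft (N : ℕ) : Set (BruckZero S) :=
  {x | ∃ (a : ℕ) (s : S) (b : ℕ), N ≤ a ∧ x = ↑(mk a s b)}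

variable (S) in
def farRight (N : ℕ) : Set (BruckZero S) :=
  {x | ∃ (a : ℕ) (s : S) (b : ℕ), N ≤ b ∧ x = ↑(mk a s b)}

variable (S) in
def far (N : ℕ) : Set (BruckZero S) := farLeft S N ∪ farRight S N

theorem farLeft_antitone : Antitone (farLeft S) := by
  rintro N M h _ ⟨a, s, b, ha, rfl⟩
  exact ⟨a, s, b, h.trans ha, rfl⟩

theorem farRight_antitone : Antitone (farRight S) := by
  rintro N M h _ ⟨a, s, b, hb, rfl⟩
  exact ⟨a, s, b, h.trans hb, rfl⟩

theorem far_antitone : Antitone (far S) :=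
  fun _ _ h => union_subset_union (farLeft_antitone h) (farRight_antitone h)

theorem coe_mk_mem_far {N a b : ℕ} {s : S} :
    (↑(mk a s b) : BruckZero S) ∈ far S N ↔ N ≤ a ∨ N ≤ b := by
  simp [far, farLeft, farRight, mk_inj]

section Topology

variable [MulOneClass S] [TopologicalSpace (BruckZero S)] [SeparatelyContinuousMul (BruckZero S)]

theorem coe_mk_notMem_closure_farLeft [T2Space (BruckZero S)] (A B : ℕ) (σ : S) :
    (↑(mk A σ B) : BruckZero S) ∉ closure (farLeft S (A + 1)) := by
  intro hp
  have hEq : EqOn (((mk 1 1 (A + 1) : Bruck S) : BruckZero S) * ·)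
      (((mk 0 1 A : Bruck S) : BruckZero S) * ·) (farLeft S (A + 1)) := by
    rintro _ ⟨a, s, b, ha, rfl⟩
    simp only [← WithZero.coe_mul, mk_one_mul_mk_of_le ha,
      mk_one_mul_mk_of_le (Nat.le_of_succ_le ha)]
    congr 2
    omega
  have := hEq.closure (continuous_const_mul _) (continuous_const_mul _) hp
  simp only [← WithZero.coe_mul, mk_mul_mk_of_gt _ _ (Nat.lt_succ_self A),
    mk_one_mul_mk_of_le le_rfl, WithZero.coe_inj, mk_inj] at this
  omega

theorem coe_mk_notMem_closure_farRight [T2Space (BruckZero S)] (A B : ℕ) (σ : S) :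
    (↑(mk A σ B) : BruckZero S) ∉ closure (farRight S (B + 1)) := by
  intro hp
  have hEq : EqOn (· * ((mk (B + 1) 1 1 : Bruck S) : BruckZero S))
      (· * ((mk B 1 0 : Bruck S) : BruckZero S)) (farRight S (B + 1)) := by
    rintro _ ⟨a, s, b, hb, rfl⟩
    simp only [← WithZero.coe_mul, mk_mul_mk_one_of_le hb,
      mk_mul_mk_one_of_le (Nat.le_of_succ_le hb)]
    congr 2
    omega
  have := hEq.closure (continuous_mul_const _) (continuous_mul_const _) hp
  simp only [← WithZero.coe_mul, mk_mul_mk_of_lt _ _ (Nat.lt_succ_self B),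
    mk_mul_mk_one_of_le le_rfl, WithZero.coe_inj, mk_inj] at this
  omega

theorem eq_zero_of_forall_mem_closure_far [T2Space (BruckZero S)] {p : BruckZero S}
    (hp : ∀ N, p ∈ closure (far S N)) : p = 0 := by
  obtain rfl | ⟨A, σ, B, rfl⟩ := eq_zero_or_exists_eq_mk p
  · rfl
  have h := hp (A + B + 1)
  rw [far, closure_union] at h
  rcases h with h | h
  · exact absurd (closure_mono (farLeft_antitone (by omega)) h)
      (coe_mk_notMem_closure_farLeft A B σ)
  · exact absurd (closure_mono (farRight_antitone (by omega)) h)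
      (coe_mk_notMem_closure_farRight A B σ)

theorem exists_disjoint_far_of_isCompact [T2Space (BruckZero S)] {C : Set (BruckZero S)}
    (hC : IsCompact C) (h0 : 0 ∉ C) : ∃ N, Disjoint C (far S N) := by
  have hC0 : C ∩ ⋂ N, closure (far S N) = ∅ :=
    eq_empty_iff_forall_notMem.mpr fun x ⟨hxC, hx⟩ =>
      h0 (eq_zero_of_forall_mem_closure_far (mem_iInter.mp hx) ▸ hxC)
  obtain ⟨N, hN⟩ := hC.elim_directed_family_closed _ (fun _ => isClosed_closure) hC0
    (Antitone.directed_ge fun _ _ h => closure_mono (far_antitone h))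
  exact ⟨N, disjoint_iff_inter_eq_empty.mpr
    (subset_eq_empty (inter_subset_inter_right _ subset_closure) hN)⟩

theorem exists_mapsTo_far [T2Space (BruckZero S)] {K V : Set (BruckZero S)} (hK : IsCompact K)
    (hV : IsOpen V) {T : BruckZero S → BruckZero S} (hT : Continuous T) (hT0 : T 0 ∈ V) :
    ∃ N, MapsTo T (K ∩ far S N) V := by
  obtain ⟨N, hN⟩ := exists_disjoint_far_of_isCompact (hK.diff (hV.preimage hT)) fun h => h.2 hT0
  refine ⟨N, fun x ⟨hxK, hxN⟩ => ?_⟩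
  by_contra hTx
  exact hN.ne_of_mem ⟨hxK, hTx⟩ hxN rfl

theorem compl_box_mem_nhds_zero [T1Space (BruckZero S)] (a b : ℕ) :
    (box S a b)ᶜ ∈ 𝓝 (0 : BruckZero S) := by
  have hΘ : Continuous fun x : BruckZero S =>
      ((mk 0 1 (a + 1) : Bruck S) : BruckZero S) * x * ((mk (b + 1) 1 0 : Bruck S) : BruckZero S) :=
    (continuous_const_mul _).mul_const _
  refine Filter.mem_of_superset
    (hΘ.continuousAt.preimage_mem_nhds (compl_singleton_mem_nhds (x := 1) (by simp))) ?_
  rintro _ hx ⟨t, rfl⟩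
  apply hx
  simp only [← WithZero.coe_mul, mk_mul_mk_of_gt _ _ (Nat.lt_succ_self a)]
  rw [mk_mul_mk_one_of_le (by omega), show 0 + (b + (a + 1) - a) - (b + 1) = 0 by omega]
  rfl

theorem exists_coe_mk_mem_inter_far [T1Space (BruckZero S)] {V : Set (BruckZero S)}
    (h0 : ¬IsOpen ({0} : Set (BruckZero S))) (hV : V ∈ 𝓝 0) (N : ℕ) :
    ∃ (a : ℕ) (s : S) (b : ℕ), (↑(mk a s b) : BruckZero S) ∈ V ∩ far S N := by
  by_contra! hVN
  refine h0 (isOpen_iff_mem_nhds.mpr fun x hx => ?_)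
  rw [mem_singleton_iff.mp hx]
  have hW : V ∩ ⋂ (a : Fin N) (b : Fin N), (box S a b)ᶜ ∈ 𝓝 (0 : BruckZero S) :=
    Filter.inter_mem hV (Filter.iInter_mem.mpr fun a =>
      Filter.iInter_mem.mpr fun b => compl_box_mem_nhds_zero a b)
  refine Filter.mem_of_superset hW fun x ⟨hxV, hx⟩ => ?_
  obtain rfl | ⟨a, s, b, rfl⟩ := eq_zero_or_exists_eq_mk x
  · rfl
  have hab : a < N ∧ b < N := by
    by_contra! h
    exact hVN a s b ⟨hxV, coe_mk_mem_far.mpr (by omega)⟩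
  exact absurd ⟨s, rfl⟩ (mem_iInter.mp (mem_iInter.mp hx ⟨a, hab.1⟩) ⟨b, hab.2⟩)

end Topology

section Walk

variable [MulOneClass S] {V : Set (BruckZero S)} {N : ℕ}

theorem coe_mk_add_mem_inter_far
    (hf : MapsTo (· * ((mk 0 1 1 : Bruck S) : BruckZero S)) (V ∩ far S N) V)
    {a b : ℕ} {s : S} (h : ↑(mk a s b) ∈ V ∩ far S N) (i : ℕ) :
    ↑(mk a s (b + i)) ∈ V ∩ far S N := by
  induction i with
  | zero => exact h
  | succ i ih =>
    refine ⟨?_, coe_mk_mem_far.mpr ?_⟩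
    · have : ((mk a s (b + i) * mk 0 1 1 : Bruck S) : BruckZero S) ∈ V := hf ih
      rwa [mk_mul_mk_zero_one_one] at this
    · have := coe_mk_mem_far.mp h.2
      omega

theorem coe_mk_mem_of_mem_of_le
    (hg : MapsTo (· * ((mk 1 1 0 : Bruck S) : BruckZero S)) (V ∩ far S N) V)
    {a b M : ℕ} {s : S} (h : ↑(mk a s M) ∈ V) (hbM : b ≤ M) (hNb : N ≤ b) :
    ↑(mk a s b) ∈ V := by
  induction M, hbM using Nat.le_induction with
  | base => exact h
  | succ M hbM ih =>
    apply ih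
    have : ((mk a s (M + 1) * mk 1 1 0 : Bruck S) : BruckZero S) ∈ V :=
      hg ⟨h, coe_mk_mem_far.mpr (Or.inr (by omega))⟩
    rwa [mk_mul_mk_one_of_le (by omega), show 0 + (M + 1) - 1 = M by omega] at this

theorem coe_mk_mem_of_mem_of_le_of_le
    (hf : MapsTo (· * ((mk 0 1 1 : Bruck S) : BruckZero S)) (V ∩ far S N) V)
    (hg : MapsTo (· * ((mk 1 1 0 : Bruck S) : BruckZero S)) (V ∩ far S N) V)
    {a b₀ b : ℕ} {s : S} (h : ↑(mk a s b₀) ∈ V) (hb₀ : N ≤ b₀) (hb : N ≤ b) :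
    ↑(mk a s b) ∈ V := by
  rcases le_total b b₀ with hbb₀ | hb₀b
  · exact coe_mk_mem_of_mem_of_le hg h hbb₀ hb
  · obtain ⟨i, rfl⟩ := Nat.exists_eq_add_of_le hb₀b
    exact (coe_mk_add_mem_inter_far hf ⟨h, coe_mk_mem_far.mpr (Or.inr hb₀)⟩ i).1

theorem coe_mk_zero_mem_of_mem
    (hĝ : MapsTo (((mk 0 1 1 : Bruck S) : BruckZero S) * ·) (V ∩ far S N) V)
    {a b : ℕ} {s : S} (h : ↑(mk a s b) ∈ V) (hb : N ≤ b) : ↑(mk 0 s b) ∈ V := by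
  induction a with
  | zero => exact h
  | succ a ih =>
    apply ih
    have : ((mk 0 1 1 * mk (a + 1) s b : Bruck S) : BruckZero S) ∈ V :=
      hĝ ⟨h, coe_mk_mem_far.mpr (Or.inr hb)⟩
    rwa [mk_one_mul_mk_of_le (by omega), show 0 + (a + 1) - 1 = a by omega] at this

end Walk

theorem exists_forall_coe_mk_zero_mem [MulOneClass S] [TopologicalSpace (BruckZero S)]
    [SeparatelyContinuousMul (BruckZero S)] [T2Space (BruckZero S)]
    [LocallyCompactSpace (BruckZero S)] (h0 : ¬IsOpen ({0} : Set (BruckZero S)))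
    {U : Set (BruckZero S)} (hU : U ∈ 𝓝 0) :
    ∃ N, ∀ b, N ≤ b → ∀ s : S, (↑(mk 0 s b) : BruckZero S) ∈ U := by
  obtain ⟨K, hK0, hKU, hK⟩ := local_compact_nhds hU
  set V := interior K
  have hV0 : (0 : BruckZero S) ∈ V := mem_interior_iff_mem_nhds.mpr hK0
  have threshold : ∀ {T : BruckZero S → BruckZero S}, Continuous T → T 0 = 0 →
      ∃ L, ∀ N, L ≤ N → MapsTo T (V ∩ far S N) V := fun hT hT0 =>
    let ⟨L, hL⟩ := exists_mapsTo_far hK isOpen_interior hT (by rwa [hT0])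
    ⟨L, fun _ hN => hL.mono_left (inter_subset_inter interior_subset (far_antitone hN))⟩
  obtain ⟨Lf, hf⟩ := threshold (continuous_mul_const ((mk 0 1 1 : Bruck S) : BruckZero S))
    (zero_mul _)
  obtain ⟨Lg, hg⟩ := threshold (continuous_mul_const ((mk 1 1 0 : Bruck S) : BruckZero S))
    (zero_mul _)
  obtain ⟨Lĝ, hĝ⟩ := threshold (continuous_const_mul ((mk 0 1 1 : Bruck S) : BruckZero S))
    (mul_zero _)
  set N := max Lf (max Lg Lĝ)
  have hfN := hf N (by omega)
  have hgN := hg N (by omega)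
  have hĝN := hĝ N (by omega)
  obtain ⟨a₀, s₀, b₀, hx₀⟩ :=
    exists_coe_mk_mem_inter_far h0 (isOpen_interior.mem_nhds hV0) N
  have h₁ : ((mk 0 s₀ (b₀ + N) : Bruck S) : BruckZero S) ∈ V :=
    coe_mk_zero_mem_of_mem hĝN (coe_mk_add_mem_inter_far hfN hx₀ N).1 (by omega)
  have h₂ : ((mk 0 1 (b₀ + N + 1) : Bruck S) : BruckZero S) ∈ V := by
    have : ((mk 0 1 1 * mk 0 s₀ (b₀ + N) : Bruck S) : BruckZero S) ∈ V :=
      hĝN ⟨h₁, coe_mk_mem_far.mpr (Or.inr (by omega))⟩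
    rwa [mk_mul_mk_of_gt _ _ Nat.zero_lt_one, Nat.sub_zero] at this
  refine ⟨N, fun b hb s => hKU (interior_subset ?_)⟩
  obtain ⟨Ls, hs⟩ := threshold (continuous_const_mul ((mk 0 s 0 : Bruck S) : BruckZero S))
    (mul_zero _)
  have hM : ((mk 0 s (max N Ls) : Bruck S) : BruckZero S) ∈ V := by
    have : ((mk 0 s 0 * mk 0 1 (max N Ls) : Bruck S) : BruckZero S) ∈ V :=
      hs Ls le_rfl ⟨coe_mk_mem_of_mem_of_le_of_le hfN hgN h₂ (by omega) (le_max_left _ _),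
        coe_mk_mem_far.mpr (Or.inr (le_max_right _ _))⟩
    rwa [mk_mul_mk_self, mul_one] at this
  exact coe_mk_mem_of_mem_of_le_of_le hfN hgN hM (le_max_left _ _) hb

theorem image_mul_mk_zero_one_one_box [MulOneClass S] (a b : ℕ) :
    (fun x : BruckZero S => x * ((mk 0 1 1 : Bruck S) : BruckZero S)) '' box S a b =
      box S a (b + 1) := by
  ext x
  constructor
  · rintro ⟨_, ⟨s, rfl⟩, rfl⟩
    exact ⟨s, by simp only [← WithZero.coe_mul, mk_mul_mk_zero_one_one]⟩
  · rintro ⟨s, rfl⟩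
    exact ⟨_, ⟨s, rfl⟩, by simp only [← WithZero.coe_mul, mk_mul_mk_zero_one_one]⟩

end BruckZero

/-- For a locally compact Hausdorff shift-continuous topology on
`B⁰(B_k)` with non-isolated zero, for every open neighborhood `U` of `0*` there is
`n_U ∈ ω` such that for all `n > n_U`,
`[0,n+1] ∩ U = ([0,n] ∩ U) · (0,(0,0),1)`. -/
theorem box_intersections_shift (k : ℕ)
    [TopologicalSpace (BruckZero (Bicyclic k))] [T2Space (BruckZero (Bicyclic k))]
    [LocallyCompactSpace (BruckZero (Bicyclic k))]
    (hτ : ShiftContinuous (BruckZero (Bicyclic k)))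
    (h0 : ¬ IsOpen ({0} : Set (BruckZero (Bicyclic k))))
    (U : Set (BruckZero (Bicyclic k)))
    (hU : IsOpen U) (h0U : (0 : BruckZero (Bicyclic k)) ∈ U) :
    ∃ nU : ℕ, ∀ n : ℕ, nU < n →
      box (Bicyclic k) 0 (n + 1) ∩ U =
        (fun x : BruckZero (Bicyclic k) =>
          x * ↑(Bruck.mk 0 (1 : Bicyclic k) 1)) '' (box (Bicyclic k) 0 n ∩ U) := by
  have := hτ.separatelyContinuousMul
  obtain ⟨N, hN⟩ := BruckZero.exists_forall_coe_mk_zero_mem h0 (hU.mem_nhds h0U)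
  have hbox : ∀ n, N ≤ n → box (Bicyclic k) 0 n ⊆ U := by
    rintro n hn _ ⟨s, rfl⟩
    exact hN n hn s
  refine ⟨N, fun n hn => ?_⟩
  rw [inter_eq_left.mpr (hbox (n + 1) (by omega)), inter_eq_left.mpr (hbox n hn.le),
    BruckZero.image_mul_mk_zero_one_one_box]
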